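/- (Modified descent lemma under self-bounding.) Let $\ell$ be differentiable with $g := -\ell' \ge 0$ and self-bounding: $g \le C_\beta\ell$ and $\ell(z)\le\ell(x)+\ell'(x)(z-x)+C_\beta g(x)(z-x)^2$ whenever $|z-x|<1$. Let $L(\mathbf{w})=\frac1n\sum_i\ell(\langle\mathbf{w},\mathbf{z}_i\rangle)$, $G(\mathbf{w})=\frac1n\sum_i g(\langle\mathbf{w},\mathbf{z}_i\rangle)$, with $\|\mathbf{z}_i\|\le 1$, and run GD $\mathbf{w}_{t+1}=\mathbf{w}_t-\eta\nabla L(\mathbf{w}_t)$. If $L(\mathbf{w}_s) \le \frac{1}{4C_\beta^2\eta}$ for some $s$, then for all $t \ge s$: $L(\mathbf{w}_t)\le\frac{1}{4C_\beta^2\eta}$, $G(\mathbf{w}_t)\le\frac{1}{4C_\beta\eta}$, and $L(\mathbf{w}_{t+1}) \le L(\mathbf{w}_t) - \frac{3\eta}{4}\|\nabla L(\mathbf{w}_t)\|^2$. -/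

import Mathlib

/-!
Along the step `v - η • u`, each sample margin `⟪v, z i⟫` moves by `η ⟪u, z i⟫`, of size at most
`η ‖u‖ < 1`, so the quadratic self-bounding upper bound applies sample by sample. Averaging gives
`L(v - η∇L) ≤ L(v) - η ‖∇L‖² + Cβ η² ‖∇L‖² G(v)`, and the last term is at most `η ‖∇L‖² / 4`
as soon as `G(v) ≤ 1 / (4 Cβ η)`. Since `G ≤ Cβ L`, this holds whenever `L(v) ≤ 1 / (4 Cβ² η)`;
the descent then keeps `L` below that threshold, which closes the induction.
-/

open RealInnerProductSpace Finset

noncomputable section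

variable {E : Type*} [NormedAddCommGroup E] [InnerProductSpace ℝ E] {n : ℕ}

def SelfBoundingUpper (ℓ : ℝ → ℝ) (C : ℝ) : Prop :=
  ∀ x s : ℝ, |s - x| < 1 → ℓ s ≤ ℓ x + deriv ℓ x * (s - x) + C * (-deriv ℓ x) * (s - x) ^ 2

def empiricalRisk (f : ℝ → ℝ) (z : Fin n → E) (v : E) : ℝ :=
  (n : ℝ)⁻¹ * ∑ i, f ⟪v, z i⟫

def empiricalRiskGrad (ℓ : ℝ → ℝ) (z : Fin n → E) (v : E) : E :=
  (n : ℝ)⁻¹ • ∑ i, deriv ℓ ⟪v, z i⟫ • z i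

theorem empiricalRisk_mono {f g : ℝ → ℝ} (hfg : ∀ s, f s ≤ g s) (z : Fin n → E) (v : E) :
    empiricalRisk f z v ≤ empiricalRisk g z v :=
  mul_le_mul_of_nonneg_left (sum_le_sum fun _ _ => hfg _) (by positivity)

theorem empiricalRisk_const_mul (c : ℝ) (f : ℝ → ℝ) (z : Fin n → E) (v : E) :
    empiricalRisk (fun s => c * f s) z v = c * empiricalRisk f z v := by
  simp only [empiricalRisk, ← mul_sum]
  ring

theorem inner_empiricalRiskGrad (ℓ : ℝ → ℝ) (z : Fin n → E) (v u : E) :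
    ⟪u, empiricalRiskGrad ℓ z v⟫ = (n : ℝ)⁻¹ * ∑ i, deriv ℓ ⟪v, z i⟫ * ⟪u, z i⟫ := by
  simp only [empiricalRiskGrad, real_inner_smul_right, inner_sum]

theorem abs_inner_le_norm_of_norm_le_one (u : E) {x : E} (hx : ‖x‖ ≤ 1) : |⟪u, x⟫| ≤ ‖u‖ :=
  (abs_real_inner_le_norm u x).trans (mul_le_of_le_one_right (norm_nonneg u) hx)

theorem apply_sub_mul_le_of_selfBoundingUpper {ℓ : ℝ → ℝ} {C : ℝ} (hC : 0 ≤ C)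
    (hsb : SelfBoundingUpper ℓ C)
    {x a r η : ℝ} (hgx : 0 ≤ -deriv ℓ x) (ha : |a| ≤ r) (hη : 0 ≤ η) (hηr : η * r < 1) :
    ℓ (x - η * a) ≤ ℓ x - η * (deriv ℓ x * a) + C * (-deriv ℓ x) * (η ^ 2 * r ^ 2) := by
  have hηa : |η * a| ≤ η * r := by
    rw [abs_mul, abs_of_nonneg hη]
    exact mul_le_mul_of_nonneg_left ha hη
  have hsq : (η * a) ^ 2 ≤ η ^ 2 * r ^ 2 := by
    rw [← mul_pow, ← sq_abs]
    exact pow_le_pow_left₀ (abs_nonneg _) hηa 2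
  have key := hsb x (x - η * a) (by rw [sub_sub_cancel_left, abs_neg]; linarith)
  rw [sub_sub_cancel_left, neg_sq] at key
  nlinarith [mul_le_mul_of_nonneg_left hsq (mul_nonneg hC hgx)]

theorem empiricalRisk_sub_smul_le {ℓ : ℝ → ℝ} {C : ℝ} (hC : 0 ≤ C)
    (hsb : SelfBoundingUpper ℓ C)
    (hg : ∀ s, 0 ≤ -deriv ℓ s) {z : Fin n → E} (hz : ∀ i, ‖z i‖ ≤ 1)
    {η : ℝ} (hη : 0 ≤ η) {v u : E} (hηu : η * ‖u‖ < 1) :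
    empiricalRisk ℓ z (v - η • u) ≤ empiricalRisk ℓ z v - η * ⟪u, empiricalRiskGrad ℓ z v⟫
      + C * η ^ 2 * ‖u‖ ^ 2 * empiricalRisk (fun s => -deriv ℓ s) z v := by
  calc empiricalRisk ℓ z (v - η • u)
      ≤ (n : ℝ)⁻¹ * ∑ i, (ℓ ⟪v, z i⟫ - η * (deriv ℓ ⟪v, z i⟫ * ⟪u, z i⟫)
          + C * (-deriv ℓ ⟪v, z i⟫) * (η ^ 2 * ‖u‖ ^ 2)) := by
        refine mul_le_mul_of_nonneg_left (sum_le_sum fun i _ => ?_) (by positivity)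
        rw [inner_sub_left, real_inner_smul_left]
        exact apply_sub_mul_le_of_selfBoundingUpper hC hsb (hg _)
          (abs_inner_le_norm_of_norm_le_one u (hz i)) hη hηu
    _ = _ := by
        simp only [empiricalRisk, inner_empiricalRiskGrad, sum_add_distrib, sum_sub_distrib,
          ← mul_sum, ← sum_mul]
        ring

theorem empiricalRisk_gradient_step_le {ℓ : ℝ → ℝ} {C : ℝ} (hC : 0 ≤ C)
    (hsb : SelfBoundingUpper ℓ C)
    (hg : ∀ s, 0 ≤ -deriv ℓ s) {z : Fin n → E} (hz : ∀ i, ‖z i‖ ≤ 1)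
    {η : ℝ} (hη : 0 ≤ η) {v : E} (hstep : η * ‖empiricalRiskGrad ℓ z v‖ < 1)
    (hG : 4 * C * η * empiricalRisk (fun s => -deriv ℓ s) z v ≤ 1) :
    empiricalRisk ℓ z (v - η • empiricalRiskGrad ℓ z v)
      ≤ empiricalRisk ℓ z v - 3 * η / 4 * ‖empiricalRiskGrad ℓ z v‖ ^ 2 := by
  have hdesc := empiricalRisk_sub_smul_le hC hsb hg hz hη (v := v) hstep
  rw [real_inner_self_eq_norm_sq] at hdesc
  have hquad : η / 4 * ‖empiricalRiskGrad ℓ z v‖ ^ 2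
      * (4 * C * η * empiricalRisk (fun s => -deriv ℓ s) z v)
      ≤ η / 4 * ‖empiricalRiskGrad ℓ z v‖ ^ 2 :=
    mul_le_of_le_one_right (by positivity) hG
  nlinarith

end

theorem modified_descent_lemma_general
    {E : Type*} [NormedAddCommGroup E] [InnerProductSpace ℝ E]
    (n : ℕ) (z : Fin n → E) (hz : ∀ i, ‖z i‖ ≤ 1)
    (ℓ : ℝ → ℝ)
    (hg : ∀ s : ℝ, 0 ≤ -deriv ℓ s)
    (Cβ : ℝ) (hCβ : 0 < Cβ)
    (hsb1 : ∀ s : ℝ, -deriv ℓ s ≤ Cβ * ℓ s)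
    (hsb2 : ∀ x s : ℝ, |s - x| < 1 →
      ℓ s ≤ ℓ x + deriv ℓ x * (s - x) + Cβ * (-deriv ℓ x) * (s - x) ^ 2)
    (L : E → ℝ) (hL : ∀ v : E, L v = (n : ℝ)⁻¹ * ∑ i : Fin n, ℓ (⟪v, z i⟫))
    (G : E → ℝ)
    (hG : ∀ v : E, G v = (n : ℝ)⁻¹ * ∑ i : Fin n, -deriv ℓ (⟪v, z i⟫))
    (gradL : E → E)
    (hgrad : ∀ v : E,
      gradL v = (n : ℝ)⁻¹ • ∑ i : Fin n, deriv ℓ (⟪v, z i⟫) • z i)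
    (η : ℝ) (hη : 0 < η)
    (w : ℕ → E) (hupd : ∀ t : ℕ, w (t + 1) = w t - η • gradL (w t))
    (hstep : ∀ t : ℕ, η * ‖gradL (w t)‖ < 1)
    (s : ℕ) (hs : L (w s) ≤ 1 / (4 * Cβ ^ 2 * η)) :
    ∀ t : ℕ, s ≤ t →
      L (w t) ≤ 1 / (4 * Cβ ^ 2 * η) ∧
      G (w t) ≤ 1 / (4 * Cβ * η) ∧
      L (w (t + 1)) ≤ L (w t) - (3 * η / 4) * ‖gradL (w t)‖ ^ 2 := by
  obtain rfl : L = empiricalRisk ℓ z := funext hL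
  obtain rfl : G = empiricalRisk (fun s => -deriv ℓ s) z := funext hG
  obtain rfl : gradL = empiricalRiskGrad ℓ z := funext hgrad
  have hG_le : ∀ v, empiricalRisk ℓ z v ≤ 1 / (4 * Cβ ^ 2 * η) →
      empiricalRisk (fun s => -deriv ℓ s) z v ≤ 1 / (4 * Cβ * η) := fun v hv =>
    calc empiricalRisk (fun s => -deriv ℓ s) z v
        ≤ Cβ * empiricalRisk ℓ z v := (empiricalRisk_mono hsb1 z v).trans_eq
          (empiricalRisk_const_mul Cβ ℓ z v)
      _ ≤ Cβ * (1 / (4 * Cβ ^ 2 * η)) := mul_le_mul_of_nonneg_left hv hCβ.le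
      _ = 1 / (4 * Cβ * η) := by field_simp
  have hdescent : ∀ t, empiricalRisk ℓ z (w t) ≤ 1 / (4 * Cβ ^ 2 * η) →
      empiricalRisk ℓ z (w (t + 1))
        ≤ empiricalRisk ℓ z (w t) - 3 * η / 4 * ‖empiricalRiskGrad ℓ z (w t)‖ ^ 2 := by
    intro t ht
    rw [hupd t]
    refine empiricalRisk_gradient_step_le hCβ.le hsb2 hg hz hη.le (hstep t) ?_
    have := hG_le _ ht
    rwa [le_div_iff₀ (by positivity), mul_comm] at this
  have hL_le : ∀ t, s ≤ t → empiricalRisk ℓ z (w t) ≤ 1 / (4 * Cβ ^ 2 * η) :=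
    Nat.le_induction hs fun t _ ih =>
      ((hdescent t ih).trans (sub_le_self _ (by positivity))).trans ih
  exact fun t ht => ⟨hL_le t ht, hG_le _ (hL_le t ht), hdescent t (hL_le t ht)⟩

/-- Modified descent lemma under the self-bounding property. -/
theorem modified_descent_lemma
    {E : Type*} [NormedAddCommGroup E] [InnerProductSpace ℝ E]
    (n : ℕ) (hn : 0 < n) (z : Fin n → E) (hz : ∀ i, ‖z i‖ ≤ 1)
    (ℓ : ℝ → ℝ) (hdiff : Differentiable ℝ ℓ) (hnonneg : ∀ s, 0 ≤ ℓ s)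
    (hg : ∀ s : ℝ, 0 ≤ -deriv ℓ s)
    (Cβ : ℝ) (hCβ : 0 < Cβ)
    (hsb1 : ∀ s : ℝ, -deriv ℓ s ≤ Cβ * ℓ s)
    (hsb2 : ∀ x s : ℝ, |s - x| < 1 →
      ℓ s ≤ ℓ x + deriv ℓ x * (s - x) + Cβ * (-deriv ℓ x) * (s - x) ^ 2)
    (L : E → ℝ) (hL : ∀ v : E, L v = (n : ℝ)⁻¹ * ∑ i : Fin n, ℓ (⟪v, z i⟫))
    (G : E → ℝ)
    (hG : ∀ v : E, G v = (n : ℝ)⁻¹ * ∑ i : Fin n, -deriv ℓ (⟪v, z i⟫))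
    (gradL : E → E)
    (hgrad : ∀ v : E,
      gradL v = (n : ℝ)⁻¹ • ∑ i : Fin n, deriv ℓ (⟪v, z i⟫) • z i)
    (η : ℝ) (hη : 0 < η)
    (w : ℕ → E) (hupd : ∀ t : ℕ, w (t + 1) = w t - η • gradL (w t))
    (hstep : ∀ t : ℕ, η * ‖gradL (w t)‖ < 1)
    (s : ℕ) (hs : L (w s) ≤ 1 / (4 * Cβ ^ 2 * η)) :
    ∀ t : ℕ, s ≤ t →
      L (w t) ≤ 1 / (4 * Cβ ^ 2 * η) ∧
      G (w t) ≤ 1 / (4 * Cβ * η) ∧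
      L (w (t + 1)) ≤ L (w t) - (3 * η / 4) * ‖gradL (w t)‖ ^ 2 :=
  modified_descent_lemma_general n z hz ℓ hg Cβ hCβ hsb1 hsb2 L hL G hG gradL hgrad η hη w hupd
    hstep s hs
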